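/- arXiv:2005.00875 — 2 statements merged into one kernel-verified Lean document; each statement's English description precedes it below -/
import Mathlib

section
/- There exists a deterministic strategy such that for every constant β < 2π there exist ε > 0 and c > 0 with the following property: for every real D > 1, every treasure location z ∈ ℝ² with ‖z‖ ≤ D, and every adversary all of whose hints are angular sectors of angle at most β containing z with apex at the agent's current position, the run of the strategy against z and this adversary reaches a point at distance at most 1 from z, and the total length of the agent's trajectory up to that moment is at most c·D^{2−ε}. -/
open Real

noncomputable section

/-- Points of the Euclidean plane. -/
abbrev Pt := EuclideanSpace ℝ (Fin 2)

/-- The unit vector in direction angle `a`. -/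
def unitDir (a : ℝ) : Pt := WithLp.toLp 2 ![Real.cos a, Real.sin a]

/-- The closed angular sector with apex `p`, swept clockwise from the half-line in
direction angle `a` through angle `θ` (it consists of the points lying on the
half-lines from `p` in the direction angles `a - t` for `0 ≤ t ≤ θ`, including
both bounding half-lines). -/
def sector (p : Pt) (a θ : ℝ) : Set Pt :=
  {q | ∃ r : ℝ, 0 ≤ r ∧ ∃ t : ℝ, 0 ≤ t ∧ t ≤ θ ∧ q = p + r • unitDir (a - t)}

/-- A hint: an angular sector given by its apex, its starting direction angle and
its angle. -/
structure Hint where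
  apex : Pt
  start : ℝ
  angle : ℝ

/-- The set of points of a hint. -/
def Hint.set (h : Hint) : Set Pt := sector h.apex h.start h.angle

/-- The history of hints received after `n` hints have been supplied by adversary `adv`. -/
def hist (adv : List Hint → Hint) : ℕ → List Hint
  | 0 => []
  | n + 1 => hist adv n ++ [adv (hist adv n)]

/-- The position of the agent using strategy `strat` against adversary `adv` at the moment
it receives the `n`-th hint: it starts at the origin, and after receiving `n+1` hints it
moves to the point prescribed by the strategy applied to the hints received so far. -/
def pos (strat : List Hint → Pt) (adv : List Hint → Hint) : ℕ → Pt
  | 0 => 0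
  | n + 1 => strat (hist adv (n + 1))

/-- The `n`-th hint supplied by the adversary. -/
def hint (adv : List Hint → Hint) (n : ℕ) : Hint := adv (hist adv n)

/-- The adversary `adv` is valid against strategy `strat` for treasure `z`, with all
angles of hints belonging to `Θ`: each hint has its apex at the agent's current position,
its angle lies in `Θ`, and it contains the treasure. -/
def ValidAdv (strat : List Hint → Pt) (adv : List Hint → Hint) (z : Pt) (Θ : Set ℝ) : Prop :=
  ∀ n : ℕ, (hint adv n).apex = pos strat adv n ∧ (hint adv n).angle ∈ Θ ∧ z ∈ (hint adv n).set

/-- The length of the agent's trajectory from the origin up to the point `q` reached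
during its `n`-th move (from `pos n` towards `pos (n+1)`). -/
def cost (strat : List Hint → Pt) (adv : List Hint → Hint) (n : ℕ) (q : Pt) : ℝ :=
  (∑ i ∈ Finset.range n, dist (pos strat adv i) (pos strat adv (i + 1))) +
    dist (pos strat adv n) q

/-- The agent finds the treasure `z` at total trajectory length at most `c`: at some moment
of the run its position is within distance 1 of `z`, the length of the trajectory up to
this moment being at most `c`. -/
def Finds (strat : List Hint → Pt) (adv : List Hint → Hint) (z : Pt) (c : ℝ) : Prop :=
  ∃ n : ℕ, ∃ q ∈ segment ℝ (pos strat adv n) (pos strat adv (n + 1)),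
    dist q z ≤ 1 ∧ cost strat adv n q ≤ c

/-!
The agent works in phases `j = 0, 1, …`, phase `j` exploring the square of side `2 ^ j` centred
at the origin depth-first. Standing at the centre of a square of side `x > 1` and given a sector
of angle `θ < 2π` there, it cuts the square into a `k × k` grid, `k = gridSize θ`, and keeps the
cells meeting the sector. Enlarging `θ` to `π` if smaller, the complement of the sector contains
a disc of radius `(x / 2) sin (θ / 2)` inside the square, which swallows a whole cell, so at most
`k² - 1` cells survive. Hence the cost `T x` of a square obeys
`T x ≤ (k² - 1) (T (x / k) + √2 x)`; since `k ≤ K = gridSize β`, this is solved by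
`T x = 4 K⁴ x ^ (2 - ε)` with `ε = 1 / (2 K³)`. The phase costs grow geometrically, and the
treasure is found at the latest in the first phase whose square contains it, of side at most `4 D`.
-/

namespace TreasureHunt

lemma dist_le_sqrt_two_mul {p q : Pt} {M : ℝ} (h : ∀ i, |p i - q i| ≤ M) :
    dist p q ≤ √2 * M := by
  have hM : 0 ≤ M := (abs_nonneg _).trans (h 0)
  have hsq : ∀ i, (p i - q i) ^ 2 ≤ M ^ 2 := fun i => by
    simpa only [sq_abs] using pow_le_pow_left₀ (abs_nonneg _) (h i) 2
  rw [EuclideanSpace.dist_eq, Fin.sum_univ_two, ← Real.sqrt_sq hM, ← Real.sqrt_mul zero_le_two]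
  apply Real.sqrt_le_sqrt
  simp only [Real.dist_eq, sq_abs]
  linarith [hsq 0, hsq 1]

lemma abs_unitDir_apply_le_one (φ : ℝ) (i : Fin 2) : |unitDir φ i| ≤ 1 := by
  fin_cases i <;> simp [unitDir, abs_cos_le_one, abs_sin_le_one]

lemma dist_add_smul_unitDir_sq (p : Pt) (r ρ φ ψ : ℝ) :
    dist (p + r • unitDir φ) (p + ρ • unitDir ψ) ^ 2 =
      r ^ 2 + ρ ^ 2 - 2 * r * ρ * cos (φ - ψ) := by
  rw [EuclideanSpace.dist_eq, Real.sq_sqrt (by positivity), Fin.sum_univ_two, cos_sub]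
  simp only [unitDir, PiLp.add_apply, PiLp.smul_apply, Real.dist_eq, sq_abs,
    smul_eq_mul, Matrix.cons_val_zero, Matrix.cons_val_one]
  linear_combination r ^ 2 * sin_sq_add_cos_sq φ + ρ ^ 2 * sin_sq_add_cos_sq ψ

lemma sector_mono (p : Pt) (a : ℝ) {θ θ' : ℝ} (h : θ ≤ θ') : sector p a θ ⊆ sector p a θ' := by
  rintro q ⟨r, hr, t, ht0, htθ, rfl⟩
  exact ⟨r, hr, t, ht0, htθ.trans h, rfl⟩

/-- `a + π - θ / 2` is the direction of the bisector of the complement of the sector. -/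
lemma mul_sin_le_dist_of_mem_sector {p q : Pt} {a θ ρ : ℝ} (hπθ : π ≤ θ) (hθ : θ < 2 * π)
    (hρ : 0 ≤ ρ) (hq : q ∈ sector p a θ) :
    ρ * sin (θ / 2) ≤ dist q (p + ρ • unitDir (a + π - θ / 2)) := by
  obtain ⟨r, hr, t, ht0, htθ, rfl⟩ := hq
  have hsin : 0 ≤ sin (θ / 2) := sin_nonneg_of_nonneg_of_le_pi (by linarith [pi_pos]) (by linarith)
  have hcos : cos (a - t - (a + π - θ / 2)) ≤ -cos (θ / 2) := by
    rw [show a - t - (a + π - θ / 2) = (θ / 2 - t) - π by ring, cos_sub_pi, neg_le_neg_iff,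
      ← cos_abs (θ / 2 - t)]
    exact cos_le_cos_of_nonneg_of_le_pi (abs_nonneg _) (by linarith)
      (abs_le.2 ⟨by linarith, by linarith⟩)
  refine (pow_le_pow_iff_left₀ (by positivity) dist_nonneg two_ne_zero).1 ?_
  rw [dist_add_smul_unitDir_sq]
  nlinarith [sin_sq_add_cos_sq (θ / 2), mul_le_mul_of_nonneg_left hcos (mul_nonneg hr hρ),
    sq_nonneg (r + ρ * cos (θ / 2))]

lemma exists_fin_abs_sub_le {k : ℕ} (hk : 0 < k) {h t : ℝ} (hh : 0 < h) (ht0 : 0 ≤ t)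
    (htk : t ≤ k * h) : ∃ i : Fin k, |t - h * (i + 1 / 2)| ≤ h / 2 := by
  refine ⟨⟨min (k - 1) ⌊t / h⌋₊, by omega⟩, ?_⟩
  set i := min (k - 1) ⌊t / h⌋₊
  have lower : (i : ℝ) * h ≤ t := by
    rw [← le_div_iff₀ hh]
    exact (Nat.cast_le.2 (min_le_right _ _)).trans (Nat.floor_le (by positivity))
  have upper : t ≤ (i + 1) * h := by
    rcases le_total ⌊t / h⌋₊ (k - 1) with hle | hle
    · rw [← div_le_iff₀ hh, show i = ⌊t / h⌋₊ from min_eq_right hle]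
      exact (Nat.lt_floor_add_one _).le
    · rwa [show i = k - 1 from min_eq_left hle, Nat.cast_sub hk, Nat.cast_one, sub_add_cancel]
  rw [abs_le]
  constructor <;> linarith

structure Square where
  center : Pt
  side : ℝ

namespace Square

variable {Q : Square} {p q : Pt}

def box (Q : Square) : Set Pt := {q | ∀ i, |q i - Q.center i| ≤ Q.side / 2}

def cell (Q : Square) (k : ℕ) (ι : Fin 2 → Fin k) : Square where
  center := WithLp.toLp 2 fun i => Q.center i - Q.side / 2 + Q.side / k * (ι i + 1 / 2)
  side := Q.side / k

lemma center_mem_box (hQ : 0 ≤ Q.side) : Q.center ∈ Q.box := fun i => by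
  simpa using div_nonneg hQ zero_le_two

lemma dist_le_of_mem_box (hp : p ∈ Q.box) (hq : q ∈ Q.box) : dist p q ≤ √2 * Q.side :=
  dist_le_sqrt_two_mul fun i => by
    have := abs_sub_le (p i) (Q.center i) (q i)
    rw [abs_sub_comm (Q.center i)] at this
    linarith [hp i, hq i]

lemma dist_center_le_one (hQ : Q.side ≤ 1) (hq : q ∈ Q.box) : dist Q.center q ≤ 1 := by
  have hdist : dist Q.center q ≤ √2 * (Q.side / 2) :=
    dist_le_sqrt_two_mul fun i => by rw [abs_sub_comm]; exact hq i
  nlinarith [Real.sq_sqrt zero_le_two, Real.sqrt_nonneg 2]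

lemma box_cell_subset {k : ℕ} (ι : Fin 2 → Fin k) (hQ : 0 ≤ Q.side) :
    (Q.cell k ι).box ⊆ Q.box := by
  intro q hq i
  have hk : (0 : ℝ) < k := Nat.cast_pos.2 (ι i).pos
  have hι : (ι i : ℝ) + 1 ≤ k := by exact_mod_cast (ι i).isLt
  have hw : 0 ≤ Q.side / k := by positivity
  have hkw : k * (Q.side / k) = Q.side := by field_simp
  have hq' := abs_le.1 (hq i)
  simp only [cell, PiLp.toLp_apply] at hq'
  rw [abs_le]
  constructor <;>
    nlinarith [mul_nonneg hw (Nat.cast_nonneg (ι i : ℕ)), mul_le_mul_of_nonneg_left hι hw]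

lemma exists_mem_box_cell {k : ℕ} (hk : 0 < k) (hQ : 0 < Q.side) (hq : q ∈ Q.box) :
    ∃ ι, q ∈ (Q.cell k ι).box := by
  have hk' : (k : ℝ) ≠ 0 := by positivity
  choose ι hι using fun i => exists_fin_abs_sub_le hk (div_pos hQ (Nat.cast_pos.2 hk))
    (t := q i - Q.center i + Q.side / 2) (by linarith [(abs_le.1 (hq i)).1])
    (by rw [mul_div_cancel₀ _ hk']; linarith [(abs_le.1 (hq i)).2])
  refine ⟨ι, fun i => ?_⟩
  simp only [cell, PiLp.toLp_apply]
  convert hι i using 2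
  ring

/-- The cell containing the point of `mul_sin_le_dist_of_mem_sector` at distance `Q.side / 2`
from the centre misses the sector. -/
lemma exists_disjoint_box_cell_sector {k : ℕ} {a θ : ℝ} (hQ : 0 < Q.side) (hθ : θ < 2 * π)
    (hk : 3 < k * sin (max θ π / 2)) :
    ∃ ι, Disjoint (Q.cell k ι).box (sector Q.center a θ) := by
  have hk0 : 0 < k := Nat.pos_of_ne_zero (by rintro rfl; norm_num at hk)
  set θ' := max θ π
  set e := Q.center + (Q.side / 2) • unitDir (a + π - θ' / 2)
  have he : e ∈ Q.box := fun i => by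
    simpa [e, abs_mul, abs_of_pos (half_pos hQ)] using
      mul_le_mul_of_nonneg_left (abs_unitDir_apply_le_one (a + π - θ' / 2) i) (half_pos hQ).le
  obtain ⟨ι, heι⟩ := exists_mem_box_cell hk0 hQ he
  refine ⟨ι, Set.disjoint_left.2 fun q hqι hqs => ?_⟩
  have hfar : Q.side / 2 * sin (θ' / 2) ≤ dist q e :=
    mul_sin_le_dist_of_mem_sector (le_max_right θ π) (max_lt hθ (by linarith [pi_pos]))
      (half_pos hQ).le (sector_mono Q.center a (le_max_left θ π) hqs)
  have hnear : dist q e ≤ √2 * (Q.side / k) := dist_le_of_mem_box hqι heι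
  have hkQ : (k : ℝ) * (Q.side / k) = Q.side := by field_simp
  have hscaled : Q.side * (k * sin (θ' / 2)) ≤ 2 * √2 * Q.side :=
    calc Q.side * (k * sin (θ' / 2)) = 2 * (k * (Q.side / 2 * sin (θ' / 2))) := by ring
      _ ≤ 2 * (k * (√2 * (Q.side / k))) := by grw [hfar, hnear]
      _ = 2 * √2 * Q.side := by rw [mul_left_comm (k : ℝ), hkQ]; ring
  have hsqrt : 3 < 2 * √2 := lt_of_mul_lt_mul_right
    (by nlinarith [mul_lt_mul_of_pos_left hk hQ] : 3 * Q.side < 2 * √2 * Q.side) hQ.le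
  nlinarith [Real.sq_sqrt zero_le_two]

end Square

open Square

def gridSize (θ : ℝ) : ℕ := ⌊3 / sin (max θ π / 2)⌋₊ + 1

section gridSize

variable {θ θ' : ℝ}

lemma sin_half_max_pi_pos (hθ : θ < 2 * π) : 0 < sin (max θ π / 2) :=
  sin_pos_of_pos_of_lt_pi (by linarith [le_max_right θ π, pi_pos])
    (by linarith [max_lt hθ (by linarith [pi_pos] : π < 2 * π)])

lemma three_lt_gridSize_mul (hθ : θ < 2 * π) : 3 < gridSize θ * sin (max θ π / 2) := by
  rw [gridSize, ← div_lt_iff₀ (sin_half_max_pi_pos hθ)]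
  exact_mod_cast Nat.lt_floor_add_one _

lemma two_le_gridSize (hθ : θ < 2 * π) : 2 ≤ gridSize θ := by
  have : 1 ≤ ⌊3 / sin (max θ π / 2)⌋₊ := by
    rw [Nat.one_le_floor_iff, one_le_div (sin_half_max_pi_pos hθ)]
    linarith [sin_le_one (max θ π / 2)]
  unfold gridSize
  omega

lemma gridSize_mono (h : θ ≤ θ') (hθ' : θ' < 2 * π) : gridSize θ ≤ gridSize θ' := by
  have hsin : sin (max θ' π / 2) ≤ sin (max θ π / 2) := by
    rw [← cos_sub_pi_div_two, ← cos_sub_pi_div_two]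
    have := max_le_max_right π h
    exact cos_le_cos_of_nonneg_of_le_pi (by linarith [le_max_right θ π])
      (by linarith [max_lt hθ' (by linarith [pi_pos] : π < 2 * π), pi_pos]) (by linarith)
  unfold gridSize
  gcongr
  exact sin_half_max_pi_pos hθ'

end gridSize

open Classical in
def children (Q : Square) (h : Hint) : List Square :=
  if Q.side ≤ 1 then []
  else (Finset.univ.filter fun ι => ¬Disjoint (Q.cell (gridSize h.angle) ι).box h.set).toList.map
    (Q.cell (gridSize h.angle))

section children

variable {Q Q' : Square} {h : Hint} {q : Pt}

lemma children_of_side_le_one (hQ : Q.side ≤ 1) : children Q h = [] := if_pos hQ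

lemma exists_eq_cell_of_mem_children (hQ' : Q' ∈ children Q h) :
    ∃ ι, Q' = Q.cell (gridSize h.angle) ι := by
  unfold children at hQ'
  split_ifs at hQ'
  · simp at hQ'
  · obtain ⟨ι, -, rfl⟩ := List.mem_map.1 hQ'
    exact ⟨ι, rfl⟩

lemma exists_mem_children (hQ : 1 < Q.side) (hq : q ∈ Q.box) (hqh : q ∈ h.set) :
    ∃ Q' ∈ children Q h, q ∈ Q'.box := by
  classical
  obtain ⟨ι, hι⟩ := exists_mem_box_cell (Nat.succ_pos _) (by linarith) hq
  refine ⟨_, ?_, hι⟩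
  rw [children, if_neg hQ.not_ge]
  exact List.mem_map.2 ⟨ι, Finset.mem_toList.2 (Finset.mem_filter.2
    ⟨Finset.mem_univ _, Set.not_disjoint_iff.2 ⟨q, hι, hqh⟩⟩), rfl⟩

lemma length_children_lt (hQ : 1 < Q.side) (hapex : h.apex = Q.center) (hθ : h.angle < 2 * π) :
    (children Q h).length < gridSize h.angle ^ 2 := by
  classical
  obtain ⟨ι, hι⟩ := exists_disjoint_box_cell_sector (Q := Q) (a := h.start) (by linarith) hθ
    (three_lt_gridSize_mul hθ)
  rw [children, if_neg hQ.not_ge, List.length_map, Finset.length_toList]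
  calc _ < (Finset.univ : Finset (Fin 2 → Fin (gridSize h.angle))).card := by
        refine Finset.card_lt_card (Finset.filter_ssubset.2 ⟨ι, Finset.mem_univ _, ?_⟩)
        simpa [Hint.set, hapex] using hι
    _ = gridSize h.angle ^ 2 := by simp

end children

/-- Bernoulli's inequality gives `k ^ gap K ≤ 1 + 1 / (2 K²)` for `k ≤ K`, a loss absorbed by the
factor `1 - 1 / k²` won by discarding a cell. -/
def gap (K : ℕ) : ℝ := 1 / (2 * (K : ℝ) ^ 3)

def budget (K : ℕ) (x : ℝ) : ℝ := 4 * K ^ 4 * x ^ (2 - gap K)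

section budget

variable {K k : ℕ} {x : ℝ}

lemma gap_pos (hK : 0 < K) : 0 < gap K := by
  unfold gap
  positivity

lemma gap_nonneg (K : ℕ) : 0 ≤ gap K := by
  unfold gap
  positivity

lemma gap_le_one (K : ℕ) : gap K ≤ 1 := by
  rcases Nat.eq_zero_or_pos K with rfl | hK
  · simp [gap]
  · have : (1 : ℝ) ≤ K := by exact_mod_cast hK
    rw [gap, div_le_one (by positivity)]
    nlinarith [one_le_pow₀ this (n := 3)]

lemma one_le_two_sub_gap (K : ℕ) : 1 ≤ 2 - gap K := by linarith [gap_le_one K]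

lemma rpow_gap_le (hk : 1 ≤ k) (hkK : k ≤ K) : (k : ℝ) ^ gap K ≤ 1 + 1 / (2 * (K : ℝ) ^ 2) := by
  have hk' : (1 : ℝ) ≤ k := by exact_mod_cast hk
  have hkK' : (k : ℝ) ≤ K := by exact_mod_cast hkK
  calc (k : ℝ) ^ gap K = (1 + (k - 1)) ^ gap K := by rw [add_sub_cancel]
    _ ≤ 1 + gap K * (k - 1) :=
        rpow_one_add_le_one_add_mul_self (by linarith) (gap_nonneg K) (gap_le_one K)
    _ ≤ 1 + gap K * K := by gcongr; exacts [gap_nonneg K, by linarith]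
    _ = 1 + 1 / (2 * (K : ℝ) ^ 2) := by rw [gap]; field_simp

lemma budget_nonneg (hx : 0 ≤ x) : 0 ≤ budget K x := by
  unfold budget
  positivity

lemma budget_mono {y : ℝ} (hx : 0 ≤ x) (hxy : x ≤ y) : budget K x ≤ budget K y := by
  unfold budget
  gcongr
  linarith [one_le_two_sub_gap K]

lemma budget_mul {c : ℝ} (hc : 0 ≤ c) (hx : 0 ≤ x) :
    budget K (c * x) = c ^ (2 - gap K) * budget K x := by
  rw [budget, budget, Real.mul_rpow hc hx]
  ring

lemma two_mul_budget_le (hx : 0 ≤ x) : 2 * budget K x ≤ budget K (2 * x) := by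
  rw [budget_mul zero_le_two hx]
  refine mul_le_mul_of_nonneg_right ?_ (budget_nonneg hx)
  simpa using Real.rpow_le_rpow_of_exponent_le one_le_two (one_le_two_sub_gap K)

lemma budget_four_mul_le (hx : 0 ≤ x) : budget K (4 * x) ≤ 16 * budget K x := by
  rw [budget_mul zero_le_four hx]
  refine mul_le_mul_of_nonneg_right ?_ (budget_nonneg hx)
  calc (4 : ℝ) ^ (2 - gap K) ≤ 4 ^ (2 : ℝ) :=
        Real.rpow_le_rpow_of_exponent_le (by norm_num) (by linarith [gap_nonneg K])
    _ = 16 := by norm_num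

lemma sqrt_two_mul_le_budget (hK : 1 ≤ K) (hx : 1 ≤ x) : √2 * x ≤ budget K x := by
  have hK' : (1 : ℝ) ≤ K := by exact_mod_cast hK
  calc √2 * x ≤ 4 * K ^ 4 * x ^ (2 - gap K) :=
        mul_le_mul
          (by nlinarith [Real.sq_sqrt zero_le_two, Real.sqrt_nonneg 2, one_le_pow₀ hK' (n := 4)])
          (by simpa using Real.rpow_le_rpow_of_exponent_le hx (one_le_two_sub_gap K))
          (by linarith) (by positivity)
    _ = budget K x := rfl

lemma sub_one_mul_div_rpow_le (hk : 2 ≤ k) (hkK : k ≤ K) (hx : 0 ≤ x) :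
    ((k : ℝ) ^ 2 - 1) * (x / k) ^ (2 - gap K) ≤ (1 - 1 / (2 * (K : ℝ) ^ 2)) * x ^ (2 - gap K) := by
  have hk' : (2 : ℝ) ≤ k := by exact_mod_cast hk
  have hkK' : (k : ℝ) ≤ K := by exact_mod_cast hkK
  set α := 2 - gap K with hα
  set b := 1 / (2 * (K : ℝ) ^ 2) with hb
  have hkα : (k : ℝ) ^ α * k ^ gap K = k ^ 2 := by
    rw [← Real.rpow_add (by linarith), hα, sub_add_cancel, Real.rpow_two]
  have hcell : (x / k) ^ α * k ^ 2 = x ^ α * (k : ℝ) ^ gap K := by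
    have : (k : ℝ) ^ α ≠ 0 := by positivity
    rw [Real.div_rpow hx (by linarith), ← hkα]
    field_simp
  have hkb : ((k : ℝ) ^ 2 - 1) * (1 + b) ≤ (1 - b) * k ^ 2 := by
    have : (2 * (k : ℝ) ^ 2 - 1) * b ≤ 1 := by
      rw [hb, mul_one_div, div_le_one (by nlinarith)]
      nlinarith
    nlinarith
  refine le_of_mul_le_mul_right ?_ (pow_pos (by linarith) 2 : (0 : ℝ) < k ^ 2)
  calc ((k : ℝ) ^ 2 - 1) * (x / k) ^ α * k ^ 2 = ((k : ℝ) ^ 2 - 1) * (x ^ α * k ^ gap K) := by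
        rw [mul_assoc, hcell]
    _ ≤ ((k : ℝ) ^ 2 - 1) * (x ^ α * (1 + b)) := by
        gcongr
        · nlinarith
        · exact rpow_gap_le (by omega) hkK
    _ ≤ (1 - b) * x ^ α * k ^ 2 := by nlinarith [Real.rpow_nonneg hx α]

lemma budget_recurrence (hk : 2 ≤ k) (hkK : k ≤ K) (hx : 1 ≤ x) :
    ((k : ℝ) ^ 2 - 1) * (budget K (x / k) + √2 * x) ≤ budget K x := by
  have hkK' : (k : ℝ) ≤ K := by exact_mod_cast hkK
  set X := x ^ (2 - gap K)
  set b := 1 / (2 * (K : ℝ) ^ 2) with hb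
  have hX : x ≤ X := by
    simpa using Real.rpow_le_rpow_of_exponent_le hx (one_le_two_sub_gap K)
  have hmoves : ((k : ℝ) ^ 2 - 1) * (√2 * x) ≤ 4 * K ^ 4 * b * X := by
    have hsqrt : √2 ≤ 2 := by nlinarith [Real.sq_sqrt zero_le_two, Real.sqrt_nonneg 2]
    calc ((k : ℝ) ^ 2 - 1) * (√2 * x) ≤ K ^ 2 * (2 * X) :=
          mul_le_mul (by nlinarith) (by nlinarith [Real.sqrt_nonneg 2]) (by positivity)
            (by positivity)
      _ = 4 * K ^ 4 * b * X := by rw [hb]; field_simp; ring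
  calc ((k : ℝ) ^ 2 - 1) * (budget K (x / k) + √2 * x)
      = 4 * K ^ 4 * (((k : ℝ) ^ 2 - 1) * (x / k) ^ (2 - gap K)) + ((k : ℝ) ^ 2 - 1) * (√2 * x) := by
        rw [budget]; ring
    _ ≤ 4 * K ^ 4 * ((1 - b) * X) + 4 * K ^ 4 * b * X :=
        add_le_add (mul_le_mul_of_nonneg_left (sub_one_mul_div_rpow_le hk hkK (by linarith))
          (by positivity)) hmoves
    _ = budget K x := by rw [budget]; ring

end budget

section Sweep

variable {α : Type*} [PseudoMetricSpace α]

def pathLen (p : ℕ → α) (a b : ℕ) : ℝ := ∑ i ∈ Finset.Ico a b, dist (p i) (p (i + 1))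

variable {p : ℕ → α} {a b c n m m' : ℕ}

lemma pathLen_self (p : ℕ → α) (a : ℕ) : pathLen p a a = 0 := by simp [pathLen]

lemma pathLen_add (hab : a ≤ b) (hbc : b ≤ c) : pathLen p a b + pathLen p b c = pathLen p a c :=
  Finset.sum_Ico_consecutive _ hab hbc

lemma pathLen_succ (hab : a ≤ b) :
    pathLen p a (b + 1) = pathLen p a b + dist (p b) (p (b + 1)) :=
  Finset.sum_Ico_succ_top hab _

lemma pathLen_mono (hbc : b ≤ c) : pathLen p a b ≤ pathLen p a c :=
  Finset.sum_le_sum_of_subset_of_nonneg (Finset.Ico_subset_Ico_right hbc) fun _ _ _ => dist_nonneg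

structure Sweep (p : ℕ → α) (z : α) (n m : ℕ) (S T : Set α) (c : ℝ) : Prop where
  le : n ≤ m
  mem : ∀ i, n ≤ i → i ≤ m → p i ∈ S
  pathLen_le : pathLen p n m ≤ c
  finds : z ∈ T → ∃ i, n ≤ i ∧ i ≤ m ∧ dist (p i) z ≤ 1

variable {z : α} {S S' T T' : Set α} {c c' M : ℝ}

lemma Sweep.refl (hp : p n ∈ S) (hT : z ∈ T → dist (p n) z ≤ 1) : Sweep p z n n S T 0 where
  le := le_rfl
  mem _ h₁ h₂ := le_antisymm h₂ h₁ ▸ hp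
  pathLen_le := (pathLen_self p n).le
  finds hz := ⟨n, le_rfl, le_rfl, hT hz⟩

lemma Sweep.mono (h : Sweep p z n m S T c) (hS : S ⊆ S') (hT : z ∈ T' → z ∈ T) (hc : c ≤ c') :
    Sweep p z n m S' T' c' where
  le := h.le
  mem i h₁ h₂ := hS (h.mem i h₁ h₂)
  pathLen_le := h.pathLen_le.trans hc
  finds hz := h.finds (hT hz)

lemma Sweep.append (h₁ : Sweep p z n m S T c) (h₂ : Sweep p z (m + 1) m' S T' c')
    (hS : ∀ x ∈ S, ∀ y ∈ S, dist x y ≤ M) : Sweep p z n m' S (T ∪ T') (c + M + c') where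
  le := h₁.le.trans (Nat.le_of_succ_le h₂.le)
  mem i hi₁ hi₂ := (le_or_gt i m).elim (h₁.mem i hi₁) fun hi => h₂.mem i hi hi₂
  pathLen_le := by
    rw [← pathLen_add (h₁.le.trans m.le_succ) h₂.le, pathLen_succ h₁.le]
    linarith [h₁.pathLen_le, h₂.pathLen_le,
      hS _ (h₁.mem m h₁.le le_rfl) _ (h₂.mem (m + 1) le_rfl h₂.le)]
  finds hz := hz.elim
    (fun hz => let ⟨i, hi₁, hi₂, hi⟩ := h₁.finds hz; ⟨i, hi₁, hi₂.trans (by linarith [h₂.le]), hi⟩)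
    (fun hz => let ⟨i, hi₁, hi₂, hi⟩ := h₂.finds hz; ⟨i, by linarith [h₁.le], hi₂, hi⟩)

end Sweep

def phaseSquare (j : ℕ) : Square := ⟨0, 2 ^ j⟩

structure SearchState where
  phase : ℕ
  stack : List Square

namespace SearchState

def init : SearchState := ⟨0, [phaseSquare 0]⟩

def next : SearchState → Hint → SearchState
  | ⟨j, []⟩, _ => ⟨j + 1, [phaseSquare (j + 1)]⟩
  | ⟨j, Q :: rest⟩, h => ⟨j, children Q h ++ rest⟩

def target : SearchState → Pt
  | ⟨_, []⟩ => 0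
  | ⟨_, Q :: _⟩ => Q.center

end SearchState

def searchStrategy (l : List Hint) : Pt := (l.foldl SearchState.next SearchState.init).target

def state (adv : List Hint → Hint) (n : ℕ) : SearchState :=
  (hist adv n).foldl SearchState.next SearchState.init

section run

variable {adv : List Hint → Hint} {z : Pt}

lemma state_succ (n : ℕ) : state adv (n + 1) = (state adv n).next (hint adv n) := by
  simp [state, hist, hint]

lemma pos_eq_target (n : ℕ) : pos searchStrategy adv n = (state adv n).target := by
  cases n <;> rfl

lemma cost_pos_eq_pathLen (strat : List Hint → Pt) (n : ℕ) :
    cost strat adv n (pos strat adv n) = pathLen (pos strat adv) 0 n := by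
  rw [cost, dist_self, add_zero, pathLen, Finset.range_eq_Ico]

lemma Finds.mono {strat : List Hint → Pt} {c c' : ℝ} (h : Finds strat adv z c) (hc : c ≤ c') :
    Finds strat adv z c' :=
  let ⟨n, q, hq, hqz, hcost⟩ := h
  ⟨n, q, hq, hqz, hcost.trans hc⟩

def Clears (adv : List Hint → Hint) (z : Pt) (Q : Square) (S : Set Pt) (c : ℝ) : Prop :=
  ∀ j rest n, state adv n = ⟨j, Q :: rest⟩ →
    ∃ m, state adv (m + 1) = ⟨j, rest⟩ ∧ Sweep (pos searchStrategy adv) z n m S Q.box c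

variable {Q : Square} {S S' : Set Pt} {c c' : ℝ}

lemma Clears.mono (h : Clears adv z Q S c) (hS : S ⊆ S') (hc : c ≤ c') : Clears adv z Q S' c' :=
  fun j rest n hn =>
    let ⟨m, hm, hsweep⟩ := h j rest n hn
    ⟨m, hm, hsweep.mono hS id hc⟩

lemma pos_eq_center {n j : ℕ} {rest : List Square} (hn : state adv n = ⟨j, Q :: rest⟩) :
    pos searchStrategy adv n = Q.center := by
  rw [pos_eq_target, hn]
  rfl

lemma clears_of_side_le_one (h₀ : 0 ≤ Q.side) (h₁ : Q.side ≤ 1) : Clears adv z Q Q.box 0 := by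
  intro j rest n hn
  have hpos := pos_eq_center hn
  refine ⟨n, ?_, .refl (hpos ▸ center_mem_box h₀) fun hz => hpos ▸ dist_center_le_one h₁ hz⟩
  rw [state_succ, hn]
  show SearchState.mk j (children Q _ ++ rest) = _
  rw [children_of_side_le_one h₁, List.nil_append]

lemma Sweep.extend_clears {M : ℝ} (hS : ∀ x ∈ S, ∀ y ∈ S, dist x y ≤ M) {j n : ℕ}
    {rest L : List Square} (hL : ∀ Q ∈ L, Clears adv z Q S c) {T : Set Pt} {c₀ : ℝ} {m : ℕ}
    (hsweep : Sweep (pos searchStrategy adv) z n m S T c₀)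
    (hm : state adv (m + 1) = ⟨j, L ++ rest⟩) :
    ∃ m', state adv (m' + 1) = ⟨j, rest⟩ ∧
      Sweep (pos searchStrategy adv) z n m' S (T ∪ ⋃ Q ∈ L, Q.box) (c₀ + L.length * (M + c)) := by
  induction L generalizing T c₀ m with
  | nil => exact ⟨m, hm, by simpa using hsweep⟩
  | cons Q L ih =>
    obtain ⟨m₁, hm₁, hsweep₁⟩ := hL Q List.mem_cons_self _ _ _ hm
    obtain ⟨m', hm', hsweep'⟩ :=
      ih (fun Q' hQ' => hL Q' (List.mem_cons_of_mem _ hQ')) (hsweep.append hsweep₁ hS) hm₁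
    refine ⟨m', hm', hsweep'.mono subset_rfl (fun hz => ?_) (le_of_eq ?_)⟩
    · simpa [or_assoc] using hz
    · push_cast [List.length_cons]
      ring

variable {β : ℝ}

lemma clears_of_one_lt_side (hβ : β < 2 * π)
    (hV : ValidAdv searchStrategy adv z {θ | 0 < θ ∧ θ ≤ β}) (hQ : 1 < Q.side)
    (ih : ∀ Q' : Square, 0 ≤ Q'.side → Q'.side ≤ Q.side / 2 →
      Clears adv z Q' Q'.box (budget (gridSize β) Q'.side)) :
    Clears adv z Q Q.box (budget (gridSize β) Q.side) := by
  intro j rest n hn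
  obtain ⟨hapex, ⟨-, hθβ⟩, hzh⟩ := hV n
  have hpos := pos_eq_center hn
  have hθ : (hint adv n).angle < 2 * π := hθβ.trans_lt hβ
  set k := gridSize (hint adv n).angle
  have hk : (2 : ℝ) ≤ k := by exact_mod_cast two_le_gridSize hθ
  have hQ₀ : 0 ≤ Q.side := by linarith
  have hchildren : ∀ Q' ∈ children Q (hint adv n),
      Clears adv z Q' Q.box (budget (gridSize β) (Q.side / k)) := by
    intro Q' hQ'
    obtain ⟨ι, rfl⟩ := exists_eq_cell_of_mem_children hQ'
    exact (ih _ (div_nonneg hQ₀ k.cast_nonneg) (div_le_div_of_nonneg_left hQ₀ two_pos hk)).mono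
      (box_cell_subset ι hQ₀) le_rfl
  have hstart : Sweep (pos searchStrategy adv) z n n Q.box ∅ 0 :=
    .refl (hpos ▸ center_mem_box hQ₀) fun hz => hz.elim
  obtain ⟨m, hm, hsweep⟩ := hstart.extend_clears (fun _ hx _ hy => dist_le_of_mem_box hx hy)
    hchildren (by rw [state_succ, hn]; rfl)
  refine ⟨m, hm, hsweep.mono subset_rfl (fun hz => ?_) ?_⟩
  · obtain ⟨Q', hQ', hzQ'⟩ := exists_mem_children hQ hz hzh
    exact Or.inr (Set.mem_biUnion hQ' hzQ')
  · have hlen : ((children Q (hint adv n)).length : ℝ) + 1 ≤ k ^ 2 := by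
      exact_mod_cast length_children_lt hQ (hapex.trans hpos) hθ
    calc 0 + (children Q (hint adv n)).length * (√2 * Q.side + budget (gridSize β) (Q.side / k))
        ≤ ((k : ℝ) ^ 2 - 1) * (budget (gridSize β) (Q.side / k) + √2 * Q.side) := by
          rw [zero_add, add_comm (√2 * _)]
          gcongr
          · exact add_nonneg (budget_nonneg (by positivity)) (by positivity)
          · linarith
      _ ≤ budget (gridSize β) Q.side :=
          budget_recurrence (two_le_gridSize hθ) (gridSize_mono hθβ hβ) hQ.le

lemma clears_of_side_le_two_pow (hβ : β < 2 * π)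
    (hV : ValidAdv searchStrategy adv z {θ | 0 < θ ∧ θ ≤ β}) (N : ℕ) :
    ∀ Q : Square, 0 ≤ Q.side → Q.side ≤ 2 ^ N →
      Clears adv z Q Q.box (budget (gridSize β) Q.side) := by
  induction N with
  | zero =>
    intro Q h₀ h₁
    exact (clears_of_side_le_one h₀ (by simpa using h₁)).mono subset_rfl (budget_nonneg h₀)
  | succ N ih =>
    intro Q h₀ h₁
    rcases le_or_gt Q.side 1 with hQ | hQ
    · exact (clears_of_side_le_one h₀ hQ).mono subset_rfl (budget_nonneg h₀)
    · exact clears_of_one_lt_side hβ hV hQ fun Q' h₀' h₁' =>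
        ih Q' h₀' (by rw [pow_succ] at h₁; linarith)

def phaseCost (K j : ℕ) : ℝ := budget K (2 ^ j) + √2 * 2 ^ j

lemma reaches_phase (hβ : β < 2 * π) (hV : ValidAdv searchStrategy adv z {θ | 0 < θ ∧ θ ≤ β})
    (j : ℕ) : ∃ n, state adv n = ⟨j, [phaseSquare j]⟩ ∧
      pathLen (pos searchStrategy adv) 0 n ≤ ∑ i ∈ Finset.range j, phaseCost (gridSize β) i := by
  induction j with
  | zero => exact ⟨0, rfl, by simp [pathLen_self]⟩
  | succ j ih =>
    obtain ⟨n, hn, hlen⟩ := ih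
    have hside : 0 ≤ (phaseSquare j).side := pow_nonneg zero_le_two j
    obtain ⟨m, hm, hsweep⟩ := clears_of_side_le_two_pow hβ hV j _ hside le_rfl j [] n hn
    have hm₂ : state adv (m + 1 + 1) = ⟨j + 1, [phaseSquare (j + 1)]⟩ := by
      rw [state_succ, hm]
      rfl
    have hpos₁ : pos searchStrategy adv (m + 1) = 0 := by rw [pos_eq_target, hm]; rfl
    have hpos₂ : pos searchStrategy adv (m + 1 + 1) = 0 := by rw [pos_eq_target, hm₂]; rfl
    have hreturn : dist (pos searchStrategy adv m) 0 ≤ √2 * 2 ^ j :=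
      dist_le_of_mem_box (hsweep.mem m hsweep.le le_rfl) (center_mem_box hside)
    have hbudget : pathLen (pos searchStrategy adv) n m ≤ budget (gridSize β) (2 ^ j) :=
      hsweep.pathLen_le
    refine ⟨m + 1 + 1, hm₂, ?_⟩
    rw [pathLen_succ (by omega), pathLen_succ (by omega), ← pathLen_add (Nat.zero_le n) hsweep.le,
      hpos₁, hpos₂, dist_self, Finset.sum_range_succ, phaseCost]
    linarith

lemma finds_of_mem_box_phaseSquare (hβ : β < 2 * π)
    (hV : ValidAdv searchStrategy adv z {θ | 0 < θ ∧ θ ≤ β}) {J : ℕ}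
    (hz : z ∈ (phaseSquare J).box) :
    Finds searchStrategy adv z (∑ i ∈ Finset.range (J + 1), phaseCost (gridSize β) i) := by
  obtain ⟨n, hn, hlen⟩ := reaches_phase hβ hV J
  obtain ⟨m, -, hsweep⟩ :=
    clears_of_side_le_two_pow hβ hV J (phaseSquare J) (pow_nonneg zero_le_two J) le_rfl J [] n hn
  obtain ⟨i, -, him, hiz⟩ := hsweep.finds hz
  refine ⟨i, _, left_mem_segment ℝ _ _, hiz, ?_⟩
  rw [cost_pos_eq_pathLen, Finset.sum_range_succ, phaseCost]
  calc pathLen (pos searchStrategy adv) 0 i ≤ pathLen (pos searchStrategy adv) 0 m :=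
        pathLen_mono him
    _ = pathLen (pos searchStrategy adv) 0 n + pathLen (pos searchStrategy adv) n m :=
        (pathLen_add (Nat.zero_le n) hsweep.le).symm
    _ ≤ _ := by
        have hbudget : pathLen (pos searchStrategy adv) n m ≤ budget (gridSize β) (2 ^ J) :=
          hsweep.pathLen_le
        linarith [(by positivity : 0 ≤ √2 * (2 : ℝ) ^ J)]

end run

lemma sum_range_succ_le_two_mul {a : ℕ → ℝ} (ha₀ : 0 ≤ a 0) (ha : ∀ i, 2 * a i ≤ a (i + 1))
    (n : ℕ) : ∑ i ∈ Finset.range (n + 1), a i ≤ 2 * a n := by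
  induction n with
  | zero =>
    rw [Finset.sum_range_one]
    linarith
  | succ n ih =>
    rw [Finset.sum_range_succ]
    linarith [ha n]

lemma sum_phaseCost_le {K : ℕ} (hK : 1 ≤ K) (J : ℕ) :
    ∑ i ∈ Finset.range (J + 1), phaseCost K i ≤ 4 * budget K (2 ^ J) := by
  calc ∑ i ∈ Finset.range (J + 1), phaseCost K i
      ≤ ∑ i ∈ Finset.range (J + 1), 2 * budget K (2 ^ i) := by
        gcongr with i
        rw [phaseCost, two_mul]
        gcongr
        exact sqrt_two_mul_le_budget hK (one_le_pow₀ one_le_two)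
    _ ≤ 2 * (2 * budget K (2 ^ J)) := by
        rw [← Finset.mul_sum]
        gcongr
        refine sum_range_succ_le_two_mul (budget_nonneg zero_le_one) (fun i => ?_) J
        rw [pow_succ, mul_comm _ (2 : ℝ)]
        exact two_mul_budget_le (by positivity)
    _ = 4 * budget K (2 ^ J) := by ring

lemma mem_box_phaseSquare {z : Pt} {j : ℕ} (h : 2 * ‖z‖ ≤ 2 ^ j) : z ∈ (phaseSquare j).box :=
  fun i => by
    have := PiLp.norm_apply_le z i
    simp only [phaseSquare, PiLp.zero_apply, sub_zero, Real.norm_eq_abs] at this ⊢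
    linarith

end TreasureHunt

open TreasureHunt

/-- If all hints are angles at most a constant `β < 2π` (unknown to the agent, hence the
strategy is chosen before `β`), a deterministic agent can find the treasure at cost
`O(D^(2-ε))` for some `ε > 0`. -/
theorem treasure_hunt_angles_le_beta :
    ∃ strat : List Hint → Pt, ∀ β : ℝ, β < 2 * π →
      ∃ ε c : ℝ, 0 < ε ∧ 0 < c ∧
        ∀ D : ℝ, 1 < D → ∀ z : Pt, ‖z‖ ≤ D → ∀ adv : List Hint → Hint,
          ValidAdv strat adv z {θ : ℝ | 0 < θ ∧ θ ≤ β} →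
          Finds strat adv z (c * D ^ ((2 : ℝ) - ε)) := by
  refine ⟨searchStrategy, fun β hβ => ?_⟩
  set K := gridSize β
  have hK : 2 ≤ K := two_le_gridSize hβ
  refine ⟨gap K, 64 * (4 * K ^ 4), gap_pos (by omega), by positivity,
    fun D hD z hz adv hV => ?_⟩
  obtain ⟨n, hnD, hDn⟩ := exists_nat_pow_near hD.le one_lt_two
  have hz : z ∈ (phaseSquare (n + 2)).box :=
    mem_box_phaseSquare (by rw [pow_succ _ (n + 1)]; linarith)
  refine (finds_of_mem_box_phaseSquare hβ hV hz).mono ?_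
  calc _ ≤ 4 * budget K (2 ^ (n + 2)) := sum_phaseCost_le (by omega) _
    _ ≤ 4 * budget K (4 * D) := by
        gcongr
        exact budget_mono (by positivity) (by rw [pow_add]; linarith)
    _ ≤ 4 * (16 * budget K D) := by
        gcongr
        exact budget_four_mul_le (by linarith)
    _ = 64 * (4 * K ^ 4) * D ^ (2 - gap K) := by rw [budget]; ring
end
end

section
/- Let P be a polygonal path in ℝ² (a finite concatenation of straight segments traversed consecutively) of total length L. Then the Lebesgue measure of the set of points of ℝ² at distance at most 1 from some point of P is at most 2L + π. -/
/-!
Appending a segment `[a, b]` at the current endpoint `a` of a path enlarges the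
`r`-neighbourhood of the path only by the part of the `r`-neighbourhood of `[a, b]` lying
outside the disc of radius `r` about `a`, since that disc is already covered. After an isometry
taking `a` to `0` and `b` to `(0, d)`, this part lies in the region swept out by the upper
semicircle of radius `r` translated by `(0, d)`; by Cavalieri's principle that region has the
area `2rd` of the rectangle it shears. Induction over the segments, starting from the disc of
area `πr²` about the initial vertex, gives the bound `2rL + πr²`.
-/

open Real MeasureTheory

noncomputable section

/-- The length of the polygonal path with consecutive vertices `v 0, v 1, …, v N`:
the sum of the lengths of its segments. -/
def polyLength {N : ℕ} (v : Fin (N + 1) → Pt) : ℝ :=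
  ∑ i : Fin N, dist (v i.castSucc) (v i.succ)

/-- The set of points of the polygonal path with consecutive vertices `v 0, …, v N`. -/
def polySet {N : ℕ} (v : Fin (N + 1) → Pt) : Set Pt :=
  ⋃ i : Fin N, segment ℝ (v i.castSucc) (v i.succ)

open Set Metric

theorem volume_region_between_oc_eq_lintegral {α : Type*} [MeasurableSpace α] (μ : Measure α)
    {f g : α → ℝ} {s : Set α} (hf : Measurable f) (hg : Measurable g) (hs : MeasurableSet s) :
    μ.prod volume {p : α × ℝ | p.1 ∈ s ∧ p.2 ∈ Ioc (f p.1) (g p.1)} =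
      ∫⁻ x in s, ENNReal.ofReal (g x - f x) ∂μ := by
  rw [Measure.prod_apply (measurableSet_region_between_oc hf hg hs), ← lintegral_indicator hs]
  congr 1 with x
  by_cases hx : x ∈ s <;> simp [hx, Ioc_def]

theorem exists_linearIsometryEquiv_apply_eq_norm_smul {E : Type*} [NormedAddCommGroup E]
    [InnerProductSpace ℝ E] {e : E} (he : ‖e‖ = 1) (x : E) :
    ∃ R : E ≃ₗᵢ[ℝ] E, R x = ‖x‖ • e :=
  ⟨_, Submodule.reflection_sub (by rw [norm_smul, he, norm_norm, mul_one])⟩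

theorem dist_sq_fin_two (p q : Pt) : dist p q ^ 2 = (p 0 - q 0) ^ 2 + (p 1 - q 1) ^ 2 := by
  rw [EuclideanSpace.dist_eq, sq_sqrt (by positivity), Fin.sum_univ_two, Real.dist_eq,
    Real.dist_eq, sq_abs, sq_abs]

/-- The region swept out by the upper half of the circle of radius `r` about the origin when it
is translated by `(0, d)`. -/
def sweptArc (r d : ℝ) : Set (ℝ × ℝ) :=
  {p | p.1 ∈ Icc (-r) r ∧ p.2 ∈ Ioc (√(r ^ 2 - p.1 ^ 2)) (√(r ^ 2 - p.1 ^ 2) + d)}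

theorem measurableSet_sweptArc (r d : ℝ) : MeasurableSet (sweptArc r d) := by
  have hf : Measurable fun x : ℝ => √(r ^ 2 - x ^ 2) := by fun_prop
  exact measurableSet_region_between_oc hf (hf.add_const d) measurableSet_Icc

theorem volume_sweptArc (r d : ℝ) :
    volume (sweptArc r d) = ENNReal.ofReal d * ENNReal.ofReal (2 * r) := by
  have hf : Measurable fun x : ℝ => √(r ^ 2 - x ^ 2) := by fun_prop
  rw [Measure.volume_eq_prod, sweptArc,
    volume_region_between_oc_eq_lintegral _ hf (hf.add_const d) measurableSet_Icc]
  simp only [add_sub_cancel_left, setLIntegral_const, Real.volume_Icc]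
  ring_nf

theorem mem_sweptArc_of_near_of_far {x y r d t : ℝ} (hr : 0 ≤ r) (hd : 0 ≤ d)
    (ht : t ∈ Icc (0 : ℝ) 1) (hnear : x ^ 2 + (y - t * d) ^ 2 ≤ r ^ 2)
    (hfar : r ^ 2 < x ^ 2 + y ^ 2) : (x, y) ∈ sweptArc r d := by
  have hx : x ^ 2 ≤ r ^ 2 := by nlinarith
  have hs_sq : √(r ^ 2 - x ^ 2) ^ 2 = r ^ 2 - x ^ 2 := sq_sqrt (by linarith)
  have hs_nonneg : 0 ≤ √(r ^ 2 - x ^ 2) := sqrt_nonneg _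
  obtain ⟨hy_lo, hy_hi⟩ := abs_le_of_sq_le_sq' (a := y - t * d) (by nlinarith) hs_nonneg
  have htd : 0 ≤ t * d ∧ t * d ≤ d := ⟨by nlinarith [ht.1], by nlinarith [ht.2]⟩
  refine ⟨abs_le_of_sq_le_sq' hx hr, ?_, by linarith⟩
  by_contra! hy
  nlinarith

theorem measurePreserving_coords_fin_two :
    MeasurePreserving (fun w : Pt => (w 0, w 1)) volume volume :=
  (volume_preserving_finTwoArrow ℝ).comp (PiLp.volume_preserving_ofLp (Fin 2))

theorem volume_biUnion_closedBall_segment_diff_le (a b : Pt) (r : ℝ) :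
    volume ((⋃ y ∈ segment ℝ a b, closedBall y r) \ closedBall a r) ≤
      ENNReal.ofReal (dist a b) * ENNReal.ofReal (2 * r) := by
  set e : Pt := EuclideanSpace.single 1 1
  set d := dist a b
  obtain ⟨R, hR⟩ := exists_linearIsometryEquiv_apply_eq_norm_smul (e := e) (by simp [e]) (b - a)
  have hRd : R (b - a) = d • e := by rw [hR, ← dist_eq_norm, dist_comm]
  set G : Pt → ℝ × ℝ := fun q => (R (q - a) 0, R (q - a) 1)
  have hG : MeasurePreserving G volume volume := measurePreserving_coords_fin_two.comp
    (R.measurePreserving.comp (measurePreserving_sub_right volume a))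
  calc _ ≤ volume (G ⁻¹' sweptArc r d) := measure_mono ?_
    _ = _ := by
      rw [hG.measure_preimage (measurableSet_sweptArc r d).nullMeasurableSet, volume_sweptArc]
  rintro q ⟨hq_near, hq_far⟩
  simp only [mem_iUnion₂, mem_closedBall, exists_prop, segment_eq_image', mem_image]
    at hq_near hq_far
  obtain ⟨_, ⟨t, ht, rfl⟩, hqt⟩ := hq_near
  have hr : 0 ≤ r := dist_nonneg.trans hqt
  have hw_near : dist (R (q - a)) ((t * d) • e) ^ 2 ≤ r ^ 2 := by
    rw [← smul_smul, ← hRd, ← R.map_smul, R.dist_map, ← dist_add_left a, add_sub_cancel]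
    exact pow_le_pow_left₀ dist_nonneg hqt 2
  have hw_far : r ^ 2 < dist (R (q - a)) 0 ^ 2 := by
    rw [← R.map_zero, R.dist_map, dist_zero_right, ← dist_eq_norm]
    exact pow_lt_pow_left₀ (not_le.1 hq_far) hr two_ne_zero
  change (R (q - a) 0, R (q - a) 1) ∈ sweptArc r d
  generalize R (q - a) = w at hw_near hw_far ⊢
  rw [dist_sq_fin_two] at hw_near hw_far
  simp only [e, PiLp.smul_apply, smul_eq_mul, PiLp.single_eq_same, ne_eq, zero_ne_one,
    not_false_eq_true, PiLp.single_eq_of_ne, PiLp.zero_apply, mul_zero, mul_one, sub_zero]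
    at hw_near hw_far
  exact mem_sweptArc_of_near_of_far hr dist_nonneg ht hw_near hw_far

theorem polySet_succ {N : ℕ} (v : Fin (N + 2) → Pt) :
    polySet v =
      polySet (Fin.init v) ∪ segment ℝ (v (Fin.last N).castSucc) (v (Fin.last (N + 1))) := by
  rw [polySet, iUnion_fin_add_one_eq_iUnion_castSucc]
  rfl

theorem polyLength_succ {N : ℕ} (v : Fin (N + 2) → Pt) :
    polyLength v =
      polyLength (Fin.init v) + dist (v (Fin.last N).castSucc) (v (Fin.last (N + 1))) := by
  rw [polyLength, Fin.sum_univ_castSucc]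
  rfl

theorem polyLength_nonneg {N : ℕ} (v : Fin (N + 1) → Pt) : 0 ≤ polyLength v :=
  Finset.sum_nonneg fun _ _ => dist_nonneg

theorem volume_biUnion_closedBall_polySet_union_le {r : ℝ} (hr : 0 ≤ r) {N : ℕ}
    (v : Fin (N + 1) → Pt) :
    volume ((⋃ y ∈ polySet v, closedBall y r) ∪ closedBall (v (Fin.last N)) r) ≤
      ENNReal.ofReal (2 * r * polyLength v + π * r ^ 2) := by
  induction N with
  | zero =>
    simp [polySet, polyLength, ← ENNReal.ofReal_pow hr, ← ENNReal.ofReal_mul (sq_nonneg r),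
      mul_comm]
  | succ N ih =>
    rw [polyLength_succ]
    set a := v (Fin.last N).castSucc
    set b := v (Fin.last (N + 1))
    have hsub : (⋃ y ∈ polySet v, closedBall y r) ∪ closedBall b r ⊆
        ((⋃ y ∈ polySet (Fin.init v), closedBall y r) ∪ closedBall a r) ∪
          ((⋃ y ∈ segment ℝ a b, closedBall y r) \ closedBall a r) := by
      have hb : closedBall b r ⊆ ⋃ y ∈ segment ℝ a b, closedBall y r :=
        subset_biUnion_of_mem (u := fun y => closedBall y r) (right_mem_segment ℝ a b)
      rw [polySet_succ, biUnion_union, union_assoc, union_eq_self_of_subset_right hb, union_assoc,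
        union_sdiff_self]
      exact union_subset_union_right _ subset_union_right
    calc _ ≤ _ := measure_mono hsub
      _ ≤ _ := measure_union_le _ _
      _ ≤ ENNReal.ofReal (2 * r * polyLength (Fin.init v) + π * r ^ 2) +
            ENNReal.ofReal (dist a b) * ENNReal.ofReal (2 * r) :=
        add_le_add (ih _) (volume_biUnion_closedBall_segment_diff_le a b r)
      _ = _ := by
        have := polyLength_nonneg (Fin.init v)
        rw [← ENNReal.ofReal_mul dist_nonneg, ← ENNReal.ofReal_add (by positivity) (by positivity)]
        ring_nf

/-- The area of the set of points at distance at most 1 from a polygonal path of total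
length `L` is at most `2L + π`. -/
theorem neighborhood_of_path_area (N : ℕ) (v : Fin (N + 1) → Pt) :
    volume {q : Pt | ∃ y ∈ polySet v, dist q y ≤ 1} ≤
      ENNReal.ofReal (2 * polyLength v + π) := by
  have hsub : {q : Pt | ∃ y ∈ polySet v, dist q y ≤ 1} ⊆
      (⋃ y ∈ polySet v, closedBall y 1) ∪ closedBall (v (Fin.last N)) 1 :=
    fun _ ⟨_, hy, hqy⟩ => Or.inl (mem_biUnion hy hqy)
  calc _ ≤ _ := measure_mono hsub
    _ ≤ _ := volume_biUnion_closedBall_polySet_union_le zero_le_one v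
    _ = _ := by norm_num
end
end
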